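/- The polycyclic monoid Pₙ is congruence-free if and only if n > 1. -/

import Mathlib

universe u

/-- A directed graph: vertices, edges, source and range maps. -/
structure DGraph : Type (u + 1) where
  V : Type u
  Ed : Type u
  src : Ed → V
  rng : Ed → V

/-- The end vertex of a list of edges started at `v` (ignoring composability). -/
def DGraph.ranAux (G : DGraph) : G.V → List G.Ed → G.V
  | v, [] => v
  | _, e :: es => DGraph.ranAux G (G.rng e) es

/-- The edges `l` form a composable path starting at `v`. -/
def DGraph.Chain (G : DGraph) : G.V → List G.Ed → Prop
  | _, [] => True
  | v, e :: es => G.src e = v ∧ DGraph.Chain G (G.rng e) es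

theorem DGraph.ranAux_append (G : DGraph) (v : G.V) (l1 l2 : List G.Ed) :
    G.ranAux v (l1 ++ l2) = G.ranAux (G.ranAux v l1) l2 := by
  induction l1 generalizing v with
  | nil => rfl
  | cons e es ih => exact ih (G.rng e)

theorem DGraph.chain_append (G : DGraph) {v : G.V} {l1 l2 : List G.Ed}
    (h1 : G.Chain v l1) (h2 : G.Chain (G.ranAux v l1) l2) : G.Chain v (l1 ++ l2) := by
  induction l1 generalizing v with
  | nil => exact h2
  | cons e es ih => exact ⟨h1.1, ih h1.2 h2⟩

theorem DGraph.chain_append_right (G : DGraph) {v : G.V} {l1 l2 : List G.Ed}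
    (h : G.Chain v (l1 ++ l2)) : G.Chain (G.ranAux v l1) l2 := by
  induction l1 generalizing v with
  | nil => exact h
  | cons e es ih => exact ih h.2

/-- A (finite, directed) path in the graph `G`: a start vertex together
with a composable list of edges. Vertices are the paths of length `0`. -/
structure GPath (G : DGraph.{u}) : Type u where
  start : G.V
  edges : List G.Ed
  chain : G.Chain start edges

namespace GPath

variable {G : DGraph}

/-- The range (end vertex) of a path. -/
def ran (p : GPath G) : G.V := G.ranAux p.start p.edges

/-- The path of length zero at a vertex. -/
def ofVertex (G : DGraph) (v : G.V) : GPath G := ⟨v, [], trivial⟩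

/-- The path of length one given by an edge. -/
def ofEdge (G : DGraph) (e : G.Ed) : GPath G := ⟨G.src e, [e], ⟨rfl, trivial⟩⟩

@[simp] theorem ofVertex_ran (G : DGraph) (v : G.V) : (ofVertex G v).ran = v := rfl

@[simp] theorem ofEdge_ran (G : DGraph) (e : G.Ed) : (ofEdge G e).ran = G.rng e := rfl

/-- Concatenation of composable paths. -/
def append (p q : GPath G) (h : p.ran = q.start) : GPath G :=
  ⟨p.start, p.edges ++ q.edges,
    G.chain_append p.chain (by
      show G.Chain (G.ranAux p.start p.edges) q.edges
      have : G.ranAux p.start p.edges = q.start := h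
      rw [this]; exact q.chain)⟩

@[simp] theorem append_ran (p q : GPath G) (h : p.ran = q.start) :
    (p.append q h).ran = q.ran := by
  show G.ranAux p.start (p.edges ++ q.edges) = q.ran
  rw [G.ranAux_append]
  have : G.ranAux p.start p.edges = q.start := h
  rw [this]; rfl

/-- `y` is an initial segment of the path `p`. -/
def IsPrefixOf (y p : GPath G) : Prop := y.start = p.start ∧ y.edges <+: p.edges

/-- The remainder `t` of `p` after its initial segment `y`, so that `p = y ++ t`. -/
def remainder (y p : GPath G) (h : y.IsPrefixOf p) : GPath G :=
  ⟨y.ran, p.edges.drop y.edges.length, by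
    obtain ⟨l2, hl⟩ := h.2
    rw [← hl, List.drop_left]
    show G.Chain (G.ranAux y.start y.edges) l2
    rw [h.1]
    exact G.chain_append_right (v := p.start) (l1 := y.edges) (l2 := l2)
      (by rw [hl]; exact p.chain)⟩

@[simp] theorem remainder_ran (y p : GPath G) (h : y.IsPrefixOf p) :
    (y.remainder p h).ran = p.ran := by
  obtain ⟨l2, hl⟩ := h.2
  show G.ranAux y.ran (p.edges.drop y.edges.length) = p.ran
  rw [← hl, List.drop_left]
  show G.ranAux (G.ranAux y.start y.edges) l2 = p.ran
  rw [h.1, ← G.ranAux_append, hl]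
  rfl

end GPath

/-- The graph inverse semigroup of `G` (in normal form): its elements are zero together
with the elements `x * y⁻¹` for paths `x`, `y` with the same range. -/
inductive GIS (G : DGraph.{u}) : Type u where
  | zero : GIS G
  | mk (x y : GPath G) (h : x.ran = y.ran) : GIS G

instance (G : DGraph) : Zero (GIS G) := ⟨GIS.zero⟩

open scoped Classical in
/-- Multiplication in the graph inverse semigroup. -/
noncomputable def GIS.gmul {G : DGraph} : GIS G → GIS G → GIS G
  | GIS.zero, _ => GIS.zero
  | GIS.mk _ _ _, GIS.zero => GIS.zero
  | GIS.mk x y hxy, GIS.mk p q hpq =>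
    if h1 : y.IsPrefixOf p then
      GIS.mk (x.append (y.remainder p h1) hxy) q
        ((GPath.append_ran _ _ hxy).trans ((GPath.remainder_ran _ _ _).trans hpq))
    else if h2 : p.IsPrefixOf y then
      GIS.mk x (q.append (p.remainder y h2) hpq.symm)
        (hxy.trans ((GPath.append_ran _ _ hpq.symm).trans (GPath.remainder_ran _ _ _)).symm)
    else GIS.zero

noncomputable instance (G : DGraph) : Mul (GIS G) := ⟨GIS.gmul⟩

/-- The element of `GIS G` corresponding to a vertex `v` (i.e. `v = v * v⁻¹`). -/
def vertexEl (G : DGraph) (v : G.V) : GIS G :=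
  GIS.mk (GPath.ofVertex G v) (GPath.ofVertex G v) rfl

/-- The element of `GIS G` corresponding to an edge `e` (i.e. `e = e * r(e)⁻¹`). -/
def edgeEl (G : DGraph) (e : G.Ed) : GIS G :=
  GIS.mk (GPath.ofEdge G e) (GPath.ofVertex G (G.rng e)) rfl

/-- The inverse operation on `GIS G`: `(x y⁻¹)⁻¹ = y x⁻¹`. -/
def GIS.inv {G : DGraph} : GIS G → GIS G
  | GIS.zero => GIS.zero
  | GIS.mk x y h => GIS.mk y x h.symm

/-- `a` lies in the principal left ideal generated by `b` (`S¹a ⊆ S¹b`). -/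
def GreenLeL {G : DGraph} (a b : GIS G) : Prop := a = b ∨ ∃ c, a = c * b

/-- `a` lies in the principal right ideal generated by `b` (`aS¹ ⊆ bS¹`). -/
def GreenLeR {G : DGraph} (a b : GIS G) : Prop := a = b ∨ ∃ c, a = b * c

/-- `a` lies in the principal two-sided ideal generated by `b` (`S¹aS¹ ⊆ S¹bS¹`). -/
def GreenLeJ {G : DGraph} (a b : GIS G) : Prop :=
  a = b ∨ (∃ c, a = c * b) ∨ (∃ c, a = b * c) ∨ (∃ c d, a = c * b * d)

/-- Green's `L`-relation. -/
def GreenEqL {G : DGraph} (a b : GIS G) : Prop := GreenLeL a b ∧ GreenLeL b a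

/-- Green's `R`-relation. -/
def GreenEqR {G : DGraph} (a b : GIS G) : Prop := GreenLeR a b ∧ GreenLeR b a

/-- Green's `J`-relation. -/
def GreenEqJ {G : DGraph} (a b : GIS G) : Prop := GreenLeJ a b ∧ GreenLeJ b a

/-- There is a (possibly trivial) directed path from `v` to `w` in `G`. -/
def GConnected (G : DGraph) (v w : G.V) : Prop := ∃ t : GPath G, t.start = v ∧ t.ran = w

/-- `I` is a (two-sided) ideal of `GIS G`. -/
def GISIdeal {G : DGraph} (I : Set (GIS G)) : Prop :=
  ∀ a ∈ I, ∀ c : GIS G, a * c ∈ I ∧ c * a ∈ I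

/-- `R` is the Rees congruence of some ideal `I`, i.e. `R = (I × I) ∪ Δ`. -/
def IsReesCon {G : DGraph} (R : Con (GIS G)) : Prop :=
  ∃ I : Set (GIS G), GISIdeal I ∧ ∀ a b : GIS G, R a b ↔ (a ∈ I ∧ b ∈ I) ∨ a = b

/-- The only congruences on `GIS G` are the universal one and the diagonal. -/
def CongFree (G : DGraph) : Prop :=
  ∀ R : Con (GIS G), (∀ a b : GIS G, R a b) ∨ (∀ a b : GIS G, R a b ↔ a = b)

/-- The natural partial order on the inverse semigroup `GIS G`:
`a ≤ b` iff `a = ε * b` for some idempotent `ε`. -/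
def natLe {G : DGraph} (a b : GIS G) : Prop := ∃ ε : GIS G, ε * ε = ε ∧ a = ε * b

/-- The graph obtained from `G` by deleting the vertices in `S` and all
edges incident to them. -/
def DGraph.delete (G : DGraph) (S : Set G.V) : DGraph where
  V := {v : G.V // v ∉ S}
  Ed := {e : G.Ed // G.src e ∉ S ∧ G.rng e ∉ S}
  src e := ⟨G.src e.1, e.2.1⟩
  rng e := ⟨G.rng e.1, e.2.2⟩

/-- The graph with a single vertex and `n` loops; its graph inverse semigroup
is the polycyclic monoid `Pₙ`. -/
def polyGraph (n : ℕ) : DGraph :=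
  ⟨PUnit, Fin n, fun _ => PUnit.unit, fun _ => PUnit.unit⟩

/-!
Write `el n x y` for the element `x y⁻¹` of `Pₙ`, so that `el n [] []` is the identity `1`.
For `n ≥ 2`, a congruence relating distinct `X Y⁻¹` and `P Q⁻¹` relates `1 = X⁻¹ (X Y⁻¹) Y` to
`X⁻¹ (P Q⁻¹) Y` and `1 = P⁻¹ (P Q⁻¹) Q` to `P⁻¹ (X Y⁻¹) Q`; both right-hand sides equal `1` only
when `X = P` and `Y = Q`. If `1` is related to some `u v⁻¹ ≠ 1`, say `u` starts with the letter `e`,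
then for a letter `g ≠ e` we get `g⁻¹ = g⁻¹ 1 ~ g⁻¹ u v⁻¹ = 0`, and `0 ~ x y⁻¹` gives
`0 = x⁻¹ 0 y ~ x⁻¹ (x y⁻¹) y = 1`, after which everything is related to `0`.
For `n = 1` the index `x y⁻¹ ↦ |x| - |y|` (and `0 ↦ none`) is multiplicative, so its kernel is a
congruence, and it is neither the diagonal nor universal.
-/

theorem List.prefix_of_length_le_of_subsingleton {α : Type*} [Subsingleton α]
    {l₁ l₂ : List α} (h : l₁.length ≤ l₂.length) : l₁ <+: l₂ :=
  List.prefix_iff_eq_take.mpr <|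
    List.ext_getElem (by simp [h]) fun _ _ _ => Subsingleton.elim _ _

namespace GIS

variable {G : DGraph}

protected theorem zero_mul (a : GIS G) : 0 * a = 0 := rfl

protected theorem mul_zero (a : GIS G) : a * 0 = 0 := by
  cases a <;> rfl

end GIS

namespace Polycyclic

variable {n : ℕ}

theorem chain_polyGraph (v : (polyGraph n).V) (l : List (Fin n)) : (polyGraph n).Chain v l := by
  induction l generalizing v with
  | nil => trivial
  | cons e es ih => exact ⟨rfl, ih _⟩

def path (n : ℕ) (l : List (Fin n)) : GPath (polyGraph n) :=
  ⟨PUnit.unit, l, chain_polyGraph _ l⟩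

def el (n : ℕ) (x y : List (Fin n)) : GIS (polyGraph n) :=
  GIS.mk (path n x) (path n y) rfl

theorem mk_eq_el (x y : GPath (polyGraph n)) (h : x.ran = y.ran) :
    GIS.mk x y h = el n x.edges y.edges := by
  obtain ⟨⟨⟩, _, _⟩ := x
  obtain ⟨⟨⟩, _, _⟩ := y
  rfl

theorem eq_zero_or_exists_eq_el (a : GIS (polyGraph n)) : a = 0 ∨ ∃ x y, a = el n x y := by
  cases a with
  | zero => exact Or.inl rfl
  | mk x y h => exact Or.inr ⟨_, _, mk_eq_el x y h⟩

theorem el_inj {x y p q : List (Fin n)} : el n x y = el n p q ↔ x = p ∧ y = q := by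
  refine ⟨fun h => ?_, fun ⟨hx, hy⟩ => hx ▸ hy ▸ rfl⟩
  injection h with hx hy
  exact ⟨congrArg GPath.edges hx, congrArg GPath.edges hy⟩

theorem path_isPrefixOf_path {x p : List (Fin n)} : (path n x).IsPrefixOf (path n p) ↔ x <+: p :=
  ⟨And.right, And.intro rfl⟩

theorem el_mul_el_of_prefix (x q : List (Fin n)) {y p : List (Fin n)} (h : y <+: p) :
    el n x y * el n p q = el n (x ++ p.drop y.length) q := by
  change GIS.gmul (GIS.mk (path n x) (path n y) _) (GIS.mk (path n p) (path n q) _) = _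
  simp only [GIS.gmul]
  rw [dif_pos (path_isPrefixOf_path.mpr h), mk_eq_el]
  rfl

theorem el_mul_el_of_prefix_of_not_prefix (x q : List (Fin n)) {y p : List (Fin n)}
    (hyp : ¬ y <+: p) (hpy : p <+: y) :
    el n x y * el n p q = el n x (q ++ y.drop p.length) := by
  change GIS.gmul (GIS.mk (path n x) (path n y) _) (GIS.mk (path n p) (path n q) _) = _
  simp only [GIS.gmul]
  rw [dif_neg (mt path_isPrefixOf_path.mp hyp), dif_pos (path_isPrefixOf_path.mpr hpy),
    mk_eq_el]
  rfl

theorem el_mul_el_of_not_prefix (x q : List (Fin n)) {y p : List (Fin n)}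
    (hyp : ¬ y <+: p) (hpy : ¬ p <+: y) : el n x y * el n p q = 0 := by
  change GIS.gmul (GIS.mk (path n x) (path n y) _) (GIS.mk (path n p) (path n q) _) = _
  simp only [GIS.gmul]
  rw [dif_neg (mt path_isPrefixOf_path.mp hyp), dif_neg (mt path_isPrefixOf_path.mp hpy)]
  rfl

theorem el_nil_mul_el_self (x y : List (Fin n)) : el n [] x * el n x y = el n [] y := by
  simp [el_mul_el_of_prefix _ _ (List.prefix_refl x)]

theorem mul_el_nil_nil (a : GIS (polyGraph n)) : a * el n [] [] = a := by
  obtain rfl | ⟨x, y, rfl⟩ := eq_zero_or_exists_eq_el a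
  · rfl
  by_cases hy : y = []
  · subst hy
    simp [el_mul_el_of_prefix x [] (List.prefix_refl [])]
  · simp [el_mul_el_of_prefix_of_not_prefix x [] (by simpa using hy) y.nil_prefix]

theorem el_nil_nil_mul (a : GIS (polyGraph n)) : el n [] [] * a = a := by
  obtain rfl | ⟨x, y, rfl⟩ := eq_zero_or_exists_eq_el a
  · exact GIS.mul_zero _
  · simp [el_mul_el_of_prefix [] y x.nil_prefix]

section Bicyclic

def index : GIS (polyGraph 1) → Option ℤ
  | GIS.zero => none
  | GIS.mk x y _ => some ((x.edges.length : ℤ) - y.edges.length)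

theorem index_el (x y : List (Fin 1)) : index (el 1 x y) = some ((x.length : ℤ) - y.length) :=
  rfl

theorem index_mul (a b : GIS (polyGraph 1)) :
    index (a * b) = Option.map₂ (· + ·) (index a) (index b) := by
  obtain rfl | ⟨x, y, rfl⟩ := eq_zero_or_exists_eq_el a
  · rfl
  obtain rfl | ⟨p, q, rfl⟩ := eq_zero_or_exists_eq_el b
  · rw [GIS.mul_zero]; rfl
  by_cases hyp : y <+: p
  · rw [el_mul_el_of_prefix x q hyp, index_el, index_el, index_el, Option.map₂_some_some]
    have := hyp.length_le
    simp only [List.length_append, List.length_drop, Option.some.injEq]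
    omega
  · have hpy : p <+: y := List.prefix_of_length_le_of_subsingleton <|
      le_of_not_ge fun h => hyp (List.prefix_of_length_le_of_subsingleton h)
    rw [el_mul_el_of_prefix_of_not_prefix x q hyp hpy, index_el, index_el, index_el,
      Option.map₂_some_some]
    have := hpy.length_le
    simp only [List.length_append, List.length_drop, Option.some.injEq]
    omega

def indexCon : Con (GIS (polyGraph 1)) where
  r a b := index a = index b
  iseqv := ⟨fun _ => rfl, Eq.symm, Eq.trans⟩
  mul' h₁ h₂ := by
    simp only [index_mul]
    rw [h₁, h₂]

theorem not_congFree_one : ¬ CongFree (polyGraph 1) := by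
  intro h
  rcases h indexCon with h | h
  · exact absurd (h 0 (el 1 [] [])) (by simp [indexCon, index_el]; rintro ⟨⟩)
  · have hrel : indexCon (el 1 [0] []) (el 1 [0, 0] [0]) := by
      simp [indexCon, index_el]
    simpa [el_inj] using (h _ _).mp hrel

end Bicyclic

section CongFree

variable {R : Con (GIS (polyGraph n))}

theorem rel_all_of_rel_zero_one (h : R 0 (el n [] [])) (a b : GIS (polyGraph n)) : R a b := by
  have hzero (s : GIS (polyGraph n)) : R 0 s := by
    simpa [GIS.mul_zero, mul_el_nil_nil] using R.mul (R.refl s) h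
  exact R.trans (R.symm (hzero a)) (hzero b)

theorem rel_all_of_rel_zero_el {x y : List (Fin n)} (h : R 0 (el n x y)) (a b : GIS (polyGraph n)) :
    R a b := by
  refine rel_all_of_rel_zero_one ?_ a b
  simpa [GIS.mul_zero, GIS.zero_mul, el_nil_mul_el_self] using
    R.mul (R.mul (R.refl (el n [] x)) h) (R.refl (el n y []))

theorem exists_ne_of_one_lt (hn : 1 < n) (e : Fin n) : ∃ g : Fin n, g ≠ e :=
  haveI : Nontrivial (Fin n) := Fin.nontrivial_iff_two_le.mpr hn
  exists_ne e

theorem rel_all_of_rel_one (hn : 1 < n) {c : GIS (polyGraph n)} (h : R (el n [] []) c)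
    (hc : c ≠ el n [] []) (a b : GIS (polyGraph n)) : R a b := by
  obtain rfl | ⟨u, v, rfl⟩ := eq_zero_or_exists_eq_el c
  · exact rel_all_of_rel_zero_one (R.symm h) a b
  have not_prefix {e g : Fin n} (hg : g ≠ e) (l : List (Fin n)) :
      ¬ [g] <+: e :: l ∧ ¬ e :: l <+: [g] :=
    ⟨fun hp => hg (List.cons_prefix_cons.mp hp).1,
      fun hp => hg (List.cons_prefix_cons.mp hp).1.symm⟩
  match u, v with
  | [], [] => exact absurd rfl hc
  | e :: u, v =>
    obtain ⟨g, hg⟩ := exists_ne_of_one_lt hn e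
    have h' := R.mul (R.refl (el n [] [g])) h
    rw [mul_el_nil_nil, el_mul_el_of_not_prefix [] v (not_prefix hg u).1 (not_prefix hg u).2] at h'
    exact rel_all_of_rel_zero_el (R.symm h') a b
  | [], e :: v =>
    obtain ⟨g, hg⟩ := exists_ne_of_one_lt hn e
    have h' := R.mul h (R.refl (el n [g] []))
    rw [el_nil_nil_mul, el_mul_el_of_not_prefix [] [] (not_prefix hg v).2 (not_prefix hg v).1] at h'
    exact rel_all_of_rel_zero_el (R.symm h') a b

theorem eq_nil_and_eq_of_el_mul_el_nil_eq_one {u v w : List (Fin n)}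
    (h : el n u v * el n w [] = el n [] []) : u = [] ∧ v = w := by
  by_cases hvw : v <+: w
  · rw [el_mul_el_of_prefix u [] hvw, el_inj, List.append_eq_nil_iff] at h
    exact ⟨h.1.1, hvw.eq_of_length_le (List.drop_eq_nil_iff.mp h.1.2)⟩
  by_cases hwv : w <+: v
  · rw [el_mul_el_of_prefix_of_not_prefix u [] hvw hwv, el_inj, List.nil_append] at h
    exact absurd (hwv.eq_of_length_le (List.drop_eq_nil_iff.mp h.2) ▸ List.prefix_refl w) hvw
  · rw [el_mul_el_of_not_prefix u [] hvw hwv] at h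
    nomatch h

theorem exists_eq_append_of_conj_eq_one {X Y P Q : List (Fin n)}
    (h : el n [] X * el n P Q * el n Y [] = el n [] []) : ∃ s, X = P ++ s ∧ Y = Q ++ s := by
  by_cases hXP : X <+: P
  · rw [el_mul_el_of_prefix [] Q hXP, List.nil_append] at h
    obtain ⟨hd, rfl⟩ := eq_nil_and_eq_of_el_mul_el_nil_eq_one h
    exact ⟨[], by simpa using hXP.eq_of_length_le (List.drop_eq_nil_iff.mp hd), by simp⟩
  by_cases hPX : P <+: X
  · rw [el_mul_el_of_prefix_of_not_prefix [] Q hXP hPX] at h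
    exact ⟨X.drop P.length, (List.prefix_iff_eq_append.mp hPX).symm,
      (eq_nil_and_eq_of_el_mul_el_nil_eq_one h).2.symm⟩
  · rw [el_mul_el_of_not_prefix [] Q hXP hPX, GIS.zero_mul] at h
    nomatch h

theorem eq_of_conj_eq_one {X Y P Q : List (Fin n)}
    (h₁ : el n [] X * el n P Q * el n Y [] = el n [] [])
    (h₂ : el n [] P * el n X Y * el n Q [] = el n [] []) : el n X Y = el n P Q := by
  obtain ⟨s, rfl, rfl⟩ := exists_eq_append_of_conj_eq_one h₁
  obtain ⟨t, ht, -⟩ := exists_eq_append_of_conj_eq_one h₂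
  obtain rfl : s = [] := (List.append_eq_nil_iff.mp (by simpa using ht)).1
  simp

theorem rel_all_of_rel_of_ne (hn : 1 < n) {a b : GIS (polyGraph n)} (h : R a b) (hne : a ≠ b)
    (c d : GIS (polyGraph n)) : R c d := by
  obtain rfl | ⟨X, Y, rfl⟩ := eq_zero_or_exists_eq_el a <;>
    obtain rfl | ⟨P, Q, rfl⟩ := eq_zero_or_exists_eq_el b
  · exact absurd rfl hne
  · exact rel_all_of_rel_zero_el h c d
  · exact rel_all_of_rel_zero_el (R.symm h) c d
  have conj {X Y P Q : List (Fin n)} (h : R (el n X Y) (el n P Q)) :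
      R (el n [] []) (el n [] X * el n P Q * el n Y []) := by
    simpa [el_nil_mul_el_self] using R.mul (R.mul (R.refl (el n [] X)) h) (R.refl (el n Y []))
  by_cases h₁ : el n [] X * el n P Q * el n Y [] = el n [] []
  · by_cases h₂ : el n [] P * el n X Y * el n Q [] = el n [] []
    · exact absurd (eq_of_conj_eq_one h₁ h₂) hne
    · exact rel_all_of_rel_one hn (conj (R.symm h)) h₂ c d
  · exact rel_all_of_rel_one hn (conj h) h₁ c d

theorem congFree_of_one_lt (hn : 1 < n) : CongFree (polyGraph n) := by
  intro R
  by_cases h : ∃ a b, R a b ∧ a ≠ b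
  · obtain ⟨a, b, hab, hne⟩ := h
    exact Or.inl (rel_all_of_rel_of_ne hn hab hne)
  · push Not at h
    exact Or.inr fun a b => ⟨h a b, fun hab => hab ▸ R.refl a⟩

end CongFree

end Polycyclic

/-- The polycyclic monoid `Pₙ` (`n ≥ 1`) is congruence-free iff
`n > 1`. -/
theorem stmt16 (n : ℕ) (hn : 1 ≤ n) : CongFree (polyGraph n) ↔ 1 < n := by
  refine ⟨fun h => ?_, Polycyclic.congFree_of_one_lt⟩
  obtain rfl | hlt := hn.eq_or_lt
  · exact absurd h Polycyclic.not_congFree_one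
  · exact hlt
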